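/- arXiv:1610.04816 — 4 statements merged into one kernel-verified Lean document; each statement's English description precedes it below -/
import Mathlib

section
/- Let X be a metric space and μ a Borel measure on X with volume growth of order n with constant C, i.e. μ(B(x,r)) ≤ C·rⁿ for every x ∈ X and every r > 0, where n > 0 is a fixed real number. Let q > 0, let ε > 0, and let p₁, …, p_m ∈ X and r₁, …, r_m ∈ (0,1) satisfy Σ_{i=1}^m r_i^{n−q} < ε. Suppose g : X → [0,∞) is a Borel measurable function such that for every x ∈ X, g(x) ≤ sup { 2/r_i : 1 ≤ i ≤ m and x ∈ B(p_i, 2r_i) \ B(p_i, r_i) } (where the supremum of the empty set is 0; in particular g(x) = 0 if x lies in none of the annuli). Then ∫_X g^q dμ ≤ 2^{n+q}·C·ε. -/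
/- Each point where `g` is positive lies in some annulus `B(pᵢ, 2rᵢ) \ B(pᵢ, rᵢ)` with
`g ≤ 2 / rᵢ` there, so `g^q` is dominated by `∑ᵢ (2 / rᵢ)^q · 1_{B(pᵢ, 2rᵢ)}`. Integrating and
using the volume growth, the `i`-th term contributes at most
`(2 / rᵢ)^q · C (2rᵢ)^n = 2^(n+q) C rᵢ^(n-q)`, and these sum to less than `2^(n+q) C ε`. -/

open MeasureTheory Metric

/-- `0 < b` rules out the junk value `0` that `ℝ` assigns to an empty supremum. -/
lemma Real.exists_le_of_le_ciSup_of_pos {ι : Type*} [Finite ι] {P : ι → Prop} {a : ι → ℝ}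
    {b : ℝ} (hb : 0 < b) (h : b ≤ ⨆ (i) (_ : P i), a i) : ∃ i, P i ∧ b ≤ a i := by
  rcases isEmpty_or_nonempty ι with _ | _
  · rw [Real.iSup_of_isEmpty] at h
    exact absurd h (not_le.mpr hb)
  obtain ⟨j, hj⟩ := Finite.exists_max fun i => ⨆ (_ : P i), a i
  have hbj : b ≤ ⨆ (_ : P j), a j := h.trans (ciSup_le hj)
  by_cases hPj : P j
  · exact ⟨j, hPj, by rwa [ciSup_pos hPj] at hbj⟩
  · have : IsEmpty (P j) := isEmpty_Prop.mpr hPj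
    rw [Real.iSup_of_isEmpty] at hbj
    exact absurd hbj (not_le.mpr hb)

lemma ENNReal.ofReal_rpow_le_sum_indicator {X ι : Type*} [Fintype ι] {s : ι → Set X}
    {a : ι → ℝ} {q y : ℝ} (hq : 0 < q) {x : X} (hy0 : 0 ≤ y)
    (hy : y ≤ ⨆ (i) (_ : x ∈ s i), a i) :
    ENNReal.ofReal (y ^ q) ≤ ∑ i, (s i).indicator (fun _ => ENNReal.ofReal (a i ^ q)) x := by
  rcases hy0.eq_or_lt with rfl | hy_pos
  · simp [Real.zero_rpow hq.ne']
  obtain ⟨j, hxj, hyj⟩ := Real.exists_le_of_le_ciSup_of_pos hy_pos hy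
  calc ENNReal.ofReal (y ^ q) ≤ ENNReal.ofReal (a j ^ q) := by gcongr
    _ = (s j).indicator (fun _ => ENNReal.ofReal (a j ^ q)) x := by
      rw [Set.indicator_of_mem hxj]
    _ ≤ ∑ i, (s i).indicator (fun _ => ENNReal.ofReal (a i ^ q)) x :=
      Finset.single_le_sum (f := fun i => (s i).indicator (fun _ => ENNReal.ofReal (a i ^ q)) x)
        (fun _ _ => zero_le) (Finset.mem_univ j)

lemma MeasureTheory.lintegral_sum_indicator_const {X ι : Type*} [MeasurableSpace X]
    [Fintype ι] (μ : Measure X) {s : ι → Set X} (hs : ∀ i, MeasurableSet (s i))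
    (c : ι → ENNReal) :
    ∫⁻ x, ∑ i, (s i).indicator (fun _ => c i) x ∂μ = ∑ i, c i * μ (s i) := by
  rw [lintegral_finsetSum _ fun i _ => measurable_const.indicator (hs i)]
  simp only [lintegral_indicator_const (hs _)]

lemma Real.div_rpow_mul_mul_rpow {a r : ℝ} (ha : 0 < a) (hr : 0 < r) (n q : ℝ) :
    (a / r) ^ q * (a * r) ^ n = a ^ (n + q) * r ^ (n - q) := by
  rw [Real.div_rpow ha.le hr.le, Real.mul_rpow ha.le hr.le, Real.rpow_add ha,
    Real.rpow_sub hr]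
  have : r ^ q ≠ 0 := (Real.rpow_pos_of_pos hr q).ne'
  field_simp

lemma ofReal_rpow_mul_measure_ball_le {X : Type*} [MetricSpace X] [MeasurableSpace X]
    {μ : Measure X} {n C : ℝ}
    (hvol : ∀ (x : X) (r : ℝ), 0 < r → μ (ball x r) ≤ ENNReal.ofReal (C * r ^ n))
    (q : ℝ) (x : X) {r : ℝ} (hr : 0 < r) :
    ENNReal.ofReal ((2 / r) ^ q) * μ (ball x (2 * r)) ≤
      ENNReal.ofReal (2 ^ (n + q) * C * r ^ (n - q)) := by
  calc ENNReal.ofReal ((2 / r) ^ q) * μ (ball x (2 * r))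
      ≤ ENNReal.ofReal ((2 / r) ^ q) * ENNReal.ofReal (C * (2 * r) ^ n) := by
        gcongr
        exact hvol x _ (by positivity)
    _ = ENNReal.ofReal (2 ^ (n + q) * C * r ^ (n - q)) := by
        rw [← ENNReal.ofReal_mul (by positivity), mul_left_comm,
          Real.div_rpow_mul_mul_rpow two_pos hr]
        congr 1
        ring

lemma ENNReal.sum_ofReal_mul_le {ι : Type*} (s : Finset ι) (c : ℝ) {b : ι → ℝ} {ε : ℝ}
    (hb : ∀ i ∈ s, 0 ≤ b i) (hsum : ∑ i ∈ s, b i ≤ ε) :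
    ∑ i ∈ s, ENNReal.ofReal (c * b i) ≤ ENNReal.ofReal (c * ε) := by
  have hε : 0 ≤ ε := (Finset.sum_nonneg hb).trans hsum
  calc ∑ i ∈ s, ENNReal.ofReal (c * b i)
      = ENNReal.ofReal c * ENNReal.ofReal (∑ i ∈ s, b i) := by
        rw [ENNReal.ofReal_sum_of_nonneg hb, Finset.mul_sum]
        exact Finset.sum_congr rfl fun i hi => ENNReal.ofReal_mul' (hb i hi)
    _ ≤ ENNReal.ofReal c * ENNReal.ofReal ε := by gcongr
    _ = ENNReal.ofReal (c * ε) := (ENNReal.ofReal_mul' hε).symm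

theorem stmt_1_general {X : Type*} [MetricSpace X] [MeasurableSpace X] [BorelSpace X]
    (μ : Measure X) (n C : ℝ)
    (hvol : ∀ (x : X) (r : ℝ), 0 < r → μ (ball x r) ≤ ENNReal.ofReal (C * r ^ n))
    (q : ℝ) (hq : 0 < q) (ε : ℝ)
    (m : ℕ) (p : Fin m → X) (r : Fin m → ℝ)
    (hr : ∀ i, r i ∈ Set.Ioo (0 : ℝ) 1)
    (hsum : ∑ i, r i ^ (n - q) < ε)
    (g : X → ℝ) (hg0 : ∀ x, 0 ≤ g x)
    (hgle : ∀ x, g x ≤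
      ⨆ (i : Fin m) (_ : x ∈ ball (p i) (2 * r i) \ ball (p i) (r i)), 2 / r i) :
    ∫⁻ x, ENNReal.ofReal (g x ^ q) ∂μ ≤ ENNReal.ofReal (2 ^ (n + q) * C * ε) := by
  set A : Fin m → Set X := fun i => ball (p i) (2 * r i) \ ball (p i) (r i)
  calc ∫⁻ x, ENNReal.ofReal (g x ^ q) ∂μ
      ≤ ∫⁻ x, ∑ i, (A i).indicator (fun _ => ENNReal.ofReal ((2 / r i) ^ q)) x ∂μ :=
        lintegral_mono fun x => ENNReal.ofReal_rpow_le_sum_indicator hq (hg0 x) (hgle x)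
    _ = ∑ i, ENNReal.ofReal ((2 / r i) ^ q) * μ (A i) :=
        lintegral_sum_indicator_const μ (fun _ => measurableSet_ball.diff measurableSet_ball) _
    _ ≤ ∑ i, ENNReal.ofReal (2 ^ (n + q) * C * r i ^ (n - q)) := by
        gcongr with i
        exact (mul_le_mul_right (measure_mono Set.sdiff_subset) _).trans
          (ofReal_rpow_mul_measure_ball_le hvol q (p i) (hr i).1)
    _ ≤ ENNReal.ofReal (2 ^ (n + q) * C * ε) :=
        ENNReal.sum_ofReal_mul_le _ _ (fun i _ => Real.rpow_nonneg (hr i).1.le _) hsum.le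

/-- Lemma 3.1 of the paper (measure-theoretic content): if `μ` has volume growth of
order `n` with constant `C`, and `g` is bounded pointwise by the supremum of `2 / rᵢ`
over the annuli `B(pᵢ, 2rᵢ) \ B(pᵢ, rᵢ)` containing the point, where `∑ rᵢ^(n-q) < ε`,
then `∫ g^q dμ ≤ 2^(n+q) C ε`. -/
theorem stmt_1 {X : Type*} [MetricSpace X] [MeasurableSpace X] [BorelSpace X]
    (μ : Measure X) (n C : ℝ) (hn : 0 < n)
    (hvol : ∀ (x : X) (r : ℝ), 0 < r → μ (ball x r) ≤ ENNReal.ofReal (C * r ^ n))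
    (q : ℝ) (hq : 0 < q) (ε : ℝ) (hε : 0 < ε)
    (m : ℕ) (p : Fin m → X) (r : Fin m → ℝ)
    (hr : ∀ i, r i ∈ Set.Ioo (0 : ℝ) 1)
    (hsum : ∑ i, r i ^ (n - q) < ε)
    (g : X → ℝ) (hg0 : ∀ x, 0 ≤ g x) (hgm : Measurable g)
    (hgle : ∀ x, g x ≤
      ⨆ (i : Fin m) (_ : x ∈ ball (p i) (2 * r i) \ ball (p i) (r i)), 2 / r i) :
    ∫⁻ x, ENNReal.ofReal (g x ^ q) ∂μ ≤ ENNReal.ofReal (2 ^ (n + q) * C * ε) :=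
  stmt_1_general μ n C hvol q hq ε m p r hr hsum g hg0 hgle
end

section
/- Let N be a positive integer and let {B̄(p_i, r_i)}_{i ∈ J} be a finite family of closed balls in ℝ^N such that the closed balls {B̄(p_i, r_i/6)}_{i ∈ J} are pairwise disjoint. Suppose there is R > 0 with R ≤ r_i < 2R for every i ∈ J, and suppose there is a closed ball B̄(q, s) with 0 < s ≤ 2R such that B̄(p_i, r_i) ∩ B̄(q, s) ≠ ∅ for every i ∈ J. Then the cardinality of J is at most 108^N. -/
open Metric MeasureTheory ENNReal

/-- The counting estimate from the proof of Proposition A.2: balls with pairwise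
disjoint sixth-radius cores, radii in `[R, 2R)`, all meeting a fixed closed ball of
radius `s ≤ 2R`, number at most `108^N`. -/
theorem stmt_5 (N : ℕ) (hN : 0 < N) {ι : Type*} [Fintype ι]
    (p : ι → EuclideanSpace ℝ (Fin N)) (r : ι → ℝ)
    (hdisj : Pairwise fun i j =>
      Disjoint (closedBall (p i) (r i / 6)) (closedBall (p j) (r j / 6)))
    (R : ℝ) (hR : 0 < R) (hr : ∀ i, R ≤ r i ∧ r i < 2 * R)
    (q : EuclideanSpace ℝ (Fin N)) (s : ℝ) (hs : 0 < s) (hs2 : s ≤ 2 * R)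
    (hmeet : ∀ i, (closedBall (p i) (r i) ∩ closedBall q s).Nonempty) :
    (Fintype.card ι : ℝ) ≤ 108 ^ N := by
  classical
  have hR6 : (0:ℝ) < R / 6 := by linarith
  -- distance from each center to q
  have hdq : ∀ i, dist (p i) q ≤ r i + s := by
    intro i
    obtain ⟨y, hy1, hy2⟩ := hmeet i
    rw [mem_closedBall] at hy1 hy2
    calc dist (p i) q ≤ dist (p i) y + dist y q := dist_triangle _ _ _
      _ ≤ r i + s := add_le_add (by rwa [dist_comm]) hy2
  -- the small balls are contained in a big ball
  have hsub : ∀ i, closedBall (p i) (R / 6) ⊆ closedBall q (25 * (R / 6)) := by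
    intro i x hx
    rw [mem_closedBall] at hx ⊢
    have h1 := hdq i
    have h2 := (hr i).2
    calc dist x q ≤ dist x (p i) + dist (p i) q := dist_triangle _ _ _
      _ ≤ 25 * (R / 6) := by linarith
  -- the small balls are pairwise disjoint
  have hdisj2 : Pairwise (Function.onFun Disjoint fun i => closedBall (p i) (R / 6)) := by
    intro i j hij
    exact (hdisj hij).mono
      (closedBall_subset_closedBall (by linarith [(hr i).1]))
      (closedBall_subset_closedBall (by linarith [(hr j).1]))
  -- volume comparison
  have h1 : ∑ i, volume (closedBall (p i) (R / 6)) ≤ volume (closedBall q (25 * (R / 6))) := by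
    rw [← measure_biUnion_finset (fun i _ j _ hij => hdisj2 hij)
      (fun i _ => measurableSet_closedBall)]
    exact measure_mono (Set.iUnion₂_subset fun i _ => hsub i)
  have hfr : Module.finrank ℝ (EuclideanSpace ℝ (Fin N)) = N := by
    simp [finrank_euclideanSpace]
  have hvol : ∀ (x : EuclideanSpace ℝ (Fin N)) (t : ℝ), 0 ≤ t →
      volume (closedBall x t) = ENNReal.ofReal (t ^ N) * volume (ball (0 : EuclideanSpace ℝ (Fin N)) 1) := by
    intro x t ht
    rw [Measure.addHaar_closedBall volume x ht, hfr]
  set c := volume (ball (0 : EuclideanSpace ℝ (Fin N)) 1) with hc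
  have hc0 : c ≠ 0 := (measure_ball_pos volume 0 one_pos).ne'
  have hctop : c ≠ ⊤ := measure_ball_lt_top.ne
  have h2 : (Fintype.card ι : ℝ≥0∞) * (ENNReal.ofReal ((R / 6) ^ N) * c)
      ≤ ENNReal.ofReal (25 ^ N) * (ENNReal.ofReal ((R / 6) ^ N) * c) := by
    calc (Fintype.card ι : ℝ≥0∞) * (ENNReal.ofReal ((R / 6) ^ N) * c)
        = ∑ i : ι, volume (closedBall (p i) (R / 6)) := by
          rw [Finset.sum_congr rfl fun i _ => hvol (p i) _ hR6.le, Finset.sum_const,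
            Finset.card_univ, nsmul_eq_mul]
      _ ≤ volume (closedBall q (25 * (R / 6))) := h1
      _ = ENNReal.ofReal (25 ^ N) * (ENNReal.ofReal ((R / 6) ^ N) * c) := by
          rw [hvol _ _ (by positivity), mul_pow, ENNReal.ofReal_mul (by positivity), mul_assoc]
  have hne0 : ENNReal.ofReal ((R / 6) ^ N) * c ≠ 0 := by
    apply mul_ne_zero _ hc0
    simp only [ne_eq, ENNReal.ofReal_eq_zero, not_le]
    positivity
  have hnetop : ENNReal.ofReal ((R / 6) ^ N) * c ≠ ⊤ :=
    ENNReal.mul_ne_top ENNReal.ofReal_ne_top hctop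
  have h3 : (Fintype.card ι : ℝ≥0∞) ≤ ENNReal.ofReal (25 ^ N) :=
    (ENNReal.mul_le_mul_iff_left hne0 hnetop).mp h2
  have h4 : (Fintype.card ι : ℝ) ≤ 25 ^ N := by
    have := ENNReal.toReal_mono ENNReal.ofReal_ne_top h3
    rwa [ENNReal.toReal_natCast, ENNReal.toReal_ofReal (by positivity)] at this
  calc (Fintype.card ι : ℝ) ≤ 25 ^ N := h4
    _ ≤ 108 ^ N := by
      apply pow_le_pow_left₀ (by norm_num) (by norm_num)
end

section
/- Let N be a positive integer and let {B̄(p_i, r_i)}_{i=1}^m be a finite family of closed balls in ℝ^N (with r_i > 0) such that the closed balls {B̄(p_i, r_i/6)}_{i=1}^m are pairwise disjoint. Then for every index j ∈ {1, …, m}, the sum of 1/r_i over all indices i such that r_i ≥ r_j and B̄(p_i, r_i) ∩ B̄(p_j, r_j) ≠ ∅ is at most 4·108^N / r_j. -/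
/-!
Sort the indices `i` by the dyadic shell `2ʰ r_j ≤ rᵢ < 2ʰ⁺¹ r_j` containing `rᵢ`. Within one shell
the disjoint balls `B̄(pᵢ, rᵢ / 6)` have radius at least `2ʰ r_j / 6` and, since `B̄(pᵢ, rᵢ)` meets
`B̄(p_j, r_j)`, lie in `B̄(p_j, 20 · 2ʰ r_j / 6)`; comparing volumes, a shell holds at most `20^N`
indices. Each of them contributes `1 / rᵢ ≤ 2⁻ʰ / r_j`, and the geometric series gives
`∑ 1 / rᵢ ≤ 2 · 20^N / r_j ≤ 4 · 108^N / r_j`.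
-/

open Metric Finset MeasureTheory Module
open scoped Classical

section

variable {E ι : Type*} [NormedAddCommGroup E] [NormedSpace ℝ E] [FiniteDimensional ℝ E]

theorem pow_log_floor_le {b : ℕ} (hb : 1 < b) {x : ℝ} (hx : 1 ≤ x) :
    (b : ℝ) ^ Nat.log b ⌊x⌋₊ ≤ x := by
  have := Int.zpow_log_le_self hb (zero_lt_one.trans_le hx)
  rwa [Int.log_of_one_le_right _ hx, zpow_natCast] at this

theorem lt_pow_log_floor_succ {b : ℕ} (hb : 1 < b) {x : ℝ} (hx : 1 ≤ x) :
    x < (b : ℝ) ^ (Nat.log b ⌊x⌋₊ + 1) := by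
  have := Int.lt_zpow_succ_log_self hb x
  rwa [Int.log_of_one_le_right _ hx, ← Nat.cast_succ, zpow_natCast] at this

theorem sum_one_div_le_of_card_dyadic_le {s : Finset ι} {f : ι → ℝ} {a : ℝ} {K : ℕ}
    (ha : 0 < a) (hf : ∀ i ∈ s, a ≤ f i)
    (hK : ∀ h : ℕ, #{i ∈ s | 2 ^ h * a ≤ f i ∧ f i < 2 ^ (h + 1) * a} ≤ K) :
    ∑ i ∈ s, 1 / f i ≤ 2 * K / a := by
  set g : ι → ℕ := fun i => Nat.log 2 ⌊f i / a⌋₊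
  have hone : ∀ i ∈ s, 1 ≤ f i / a := fun i hi => (one_le_div ha).mpr (hf i hi)
  have hshell : ∀ i ∈ s, 2 ^ g i * a ≤ f i ∧ f i < 2 ^ (g i + 1) * a := fun i hi =>
    ⟨(le_div_iff₀ ha).mp (mod_cast pow_log_floor_le one_lt_two (hone i hi)),
      (div_lt_iff₀ ha).mp (mod_cast lt_pow_log_floor_succ one_lt_two (hone i hi))⟩
  have hfiber : ∀ h : ℕ, ∑ i ∈ s with g i = h, 1 / f i ≤ K * ((1 / 2) ^ h / a) := by
    intro h
    have hterm : ∀ i ∈ {i ∈ s | g i = h}, 1 / f i ≤ (1 / 2) ^ h / a := by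
      intro i hi
      obtain ⟨his, rfl⟩ := mem_filter.mp hi
      rw [one_div_pow, div_div]
      exact one_div_le_one_div_of_le (by positivity) (hshell i his).1
    have hcard : #{i ∈ s | g i = h} ≤ K :=
      (card_le_card fun i hi => by
        obtain ⟨his, rfl⟩ := mem_filter.mp hi
        exact mem_filter.mpr ⟨his, hshell i his⟩).trans (hK h)
    calc ∑ i ∈ s with g i = h, 1 / f i ≤ #{i ∈ s | g i = h} • ((1 / 2) ^ h / a) :=
          sum_le_card_nsmul _ _ _ hterm
      _ ≤ K * ((1 / 2) ^ h / a) := by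
          rw [nsmul_eq_mul]; gcongr
  calc ∑ i ∈ s, 1 / f i = ∑ h ∈ s.image g, ∑ i ∈ s with g i = h, 1 / f i :=
        (sum_fiberwise_of_maps_to (fun i hi => mem_image_of_mem g hi) _).symm
    _ ≤ ∑ h ∈ s.image g, K * ((1 / 2) ^ h / a) := sum_le_sum fun h _ => hfiber h
    _ = K / a * ∑ h ∈ s.image g, (1 / 2 : ℝ) ^ h := by
        rw [mul_sum]; exact sum_congr rfl fun h _ => by ring
    _ ≤ K / a * 2 := by
        gcongr
        exact (summable_geometric_two.sum_le_tsum _ fun h _ => by positivity).trans_eq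
          tsum_geometric_two
    _ = 2 * K / a := by ring

theorem card_mul_pow_finrank_le_of_pairwiseDisjoint_closedBall {s : Finset ι} {c : ι → E}
    {ρ : ι → ℝ} {ρ₀ R : ℝ} {x : E} (hρ₀ : 0 ≤ ρ₀) (hR : 0 ≤ R) (hle : ∀ i ∈ s, ρ₀ ≤ ρ i)
    (hsub : ∀ i ∈ s, closedBall (c i) (ρ i) ⊆ closedBall x R)
    (hd : (s : Set ι).PairwiseDisjoint fun i => closedBall (c i) (ρ i)) :
    #s * ρ₀ ^ finrank ℝ E ≤ R ^ finrank ℝ E := by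
  borelize E
  let μ : Measure E := Measure.addHaar
  have hvol : (#s : ENNReal) * ENNReal.ofReal (ρ₀ ^ finrank ℝ E) * μ (ball 0 1)
      ≤ ENNReal.ofReal (R ^ finrank ℝ E) * μ (ball 0 1) :=
    calc (#s : ENNReal) * ENNReal.ofReal (ρ₀ ^ finrank ℝ E) * μ (ball 0 1)
        = ∑ i ∈ s, ENNReal.ofReal (ρ₀ ^ finrank ℝ E) * μ (ball 0 1) := by
          rw [sum_const, nsmul_eq_mul, mul_assoc]
      _ ≤ ∑ i ∈ s, μ (closedBall (c i) (ρ i)) := by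
          refine sum_le_sum fun i hi => ?_
          rw [μ.addHaar_closedBall _ (hρ₀.trans (hle i hi))]
          gcongr
          exact hle i hi
      _ = μ (⋃ i ∈ s, closedBall (c i) (ρ i)) :=
          (measure_biUnion_finset hd fun i _ => measurableSet_closedBall).symm
      _ ≤ μ (closedBall x R) := measure_mono (Set.iUnion₂_subset hsub)
      _ = ENNReal.ofReal (R ^ finrank ℝ E) * μ (ball 0 1) := μ.addHaar_closedBall _ hR
  have hcard := (ENNReal.mul_le_mul_iff_left (measure_ball_pos μ _ one_pos).ne'
    measure_ball_lt_top.ne).mp hvol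
  rw [← ENNReal.ofReal_natCast, ← ENNReal.ofReal_mul (by positivity)] at hcard
  exact (ENNReal.ofReal_le_ofReal_iff (by positivity)).mp hcard

theorem card_dyadic_shell_le {p : ι → E} {r : ι → ℝ} {s : Finset ι} {j : ι} (hrj : 0 < r j)
    (hd : (s : Set ι).PairwiseDisjoint fun i => closedBall (p i) (r i / 6))
    (hs : ∀ i ∈ s, (closedBall (p i) (r i) ∩ closedBall (p j) (r j)).Nonempty) (h : ℕ) :
    #{i ∈ s | 2 ^ h * r j ≤ r i ∧ r i < 2 ^ (h + 1) * r j} ≤ 20 ^ finrank ℝ E := by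
  set ρ₀ := 2 ^ h * r j / 6 with hρ₀_def
  have hρ₀ : 0 < ρ₀ := by positivity
  have hrj_le : r j ≤ 2 ^ h * r j := le_mul_of_one_le_left hrj.le (one_le_pow₀ one_le_two)
  have hpack := card_mul_pow_finrank_le_of_pairwiseDisjoint_closedBall
    (s := {i ∈ s | 2 ^ h * r j ≤ r i ∧ r i < 2 ^ (h + 1) * r j}) (x := p j) (R := 20 * ρ₀)
    hρ₀.le (by positivity)
    (fun i hi => by linarith [(mem_filter.mp hi).2.1])
    (fun i hi => by
      obtain ⟨his, -, hlt⟩ := mem_filter.mp hi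
      refine closedBall_subset_closedBall' ?_
      have hdist := dist_le_add_of_nonempty_closedBall_inter_closedBall (hs i his)
      rw [pow_succ] at hlt
      -- `rᵢ / 6 + (rᵢ + r_j) < (7 / 3 + 1) · 2ʰ r_j = 20 ρ₀`: the source of the constant `20`
      linarith)
    (hd.subset (coe_subset.mpr (filter_subset _ _)))
  rw [mul_pow] at hpack
  have hcard := le_of_mul_le_mul_right hpack (pow_pos hρ₀ _)
  exact_mod_cast hcard

end

theorem stmt_6_general (N : ℕ) (m : ℕ)
    (p : Fin m → EuclideanSpace ℝ (Fin N)) (r : Fin m → ℝ) (hr : ∀ i, 0 < r i)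
    (hdisj : Pairwise fun i j =>
      Disjoint (closedBall (p i) (r i / 6)) (closedBall (p j) (r j / 6))) :
    ∀ j, ∑ i ∈ Finset.univ.filter (fun i =>
        r j ≤ r i ∧ (closedBall (p i) (r i) ∩ closedBall (p j) (r j)).Nonempty),
        1 / r i ≤ 4 * 108 ^ N / r j := by
  intro j
  refine (sum_one_div_le_of_card_dyadic_le (hr j) (fun i hi => (mem_filter.mp hi).2.1)
    fun h => card_dyadic_shell_le (hr j) (hdisj.set_pairwise _)
      (fun i hi => (mem_filter.mp hi).2.2) h).trans ?_
  rw [finrank_euclideanSpace_fin]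
  refine div_le_div_of_nonneg_right ?_ (hr j).le
  push_cast
  calc (2 : ℝ) * 20 ^ N ≤ 2 * 108 ^ N := by gcongr; norm_num
    _ ≤ 4 * 108 ^ N := by gcongr; norm_num

/-- The summed form of the dyadic counting argument in Proposition A.2: for each `j`,
the sum of `1/rᵢ` over the indices `i` with `rᵢ ≥ r_j` whose ball meets `B̄(p_j, r_j)`
is at most `4 · 108^N / r_j`. -/
theorem stmt_6 (N : ℕ) (hN : 0 < N) (m : ℕ)
    (p : Fin m → EuclideanSpace ℝ (Fin N)) (r : Fin m → ℝ) (hr : ∀ i, 0 < r i)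
    (hdisj : Pairwise fun i j =>
      Disjoint (closedBall (p i) (r i / 6)) (closedBall (p j) (r j / 6))) :
    ∀ j, ∑ i ∈ Finset.univ.filter (fun i =>
        r j ≤ r i ∧ (closedBall (p i) (r i) ∩ closedBall (p j) (r j)).Nonempty),
        1 / r i ≤ 4 * 108 ^ N / r j :=
  stmt_6_general N m p r hr hdisj
end

section
/- Let N be a positive integer, let k be a real number, and let {B̄(p_i, r_i)}_{i=1}^m be a finite family of closed balls in ℝ^N (with r_i > 0) such that the closed balls {B̄(p_i, r_i/6)}_{i=1}^m are pairwise disjoint. Then the sum, over all ordered pairs (i, j) ∈ {1, …, m}² with B̄(p_i, r_i) ∩ B̄(p_j, r_j) ≠ ∅, of min(r_i, r_j)^k / (r_i · r_j), is at most 8·108^N · Σ_{j=1}^m r_j^{k−2}. -/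
open Metric
open scoped Classical

open MeasureTheory


lemma packing_card {N : ℕ} {ι : Type*} [DecidableEq ι] (s : Finset ι)
    (q : ι → EuclideanSpace ℝ (Fin N)) (x : EuclideanSpace ℝ (Fin N)) {c : ℝ} (hc : 0 < c)
    (hdisj : Set.Pairwise ↑s fun a b => Disjoint (closedBall (q a) c) (closedBall (q b) c))
    (hsub : ∀ a ∈ s, closedBall (q a) c ⊆ closedBall x (30 * c)) :
    (s.card : ℝ) ≤ 30 ^ N := by
  set u := volume (ball (0 : EuclideanSpace ℝ (Fin N)) 1) with hu
  have hvol : ∀ (y : EuclideanSpace ℝ (Fin N)) (rr : ℝ), 0 ≤ rr →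
      volume (closedBall y rr) = ENNReal.ofReal (rr ^ N) * u := by
    intro y rr hrr
    rw [Measure.addHaar_closedBall _ _ hrr, finrank_euclideanSpace_fin]
  have h1 : ∑ a ∈ s, volume (closedBall (q a) c) ≤ volume (closedBall x (30 * c)) := by
    rw [← measure_biUnion_finset hdisj (fun a _ => measurableSet_closedBall)]
    exact measure_mono (Set.iUnion₂_subset hsub)
  rw [Finset.sum_congr rfl (fun a _ => hvol (q a) c hc.le), Finset.sum_const, nsmul_eq_mul,
    hvol x (30 * c) (by positivity)] at h1
  have h2 : ENNReal.ofReal ((30 * c) ^ N) = ENNReal.ofReal ((30 : ℝ) ^ N) * ENNReal.ofReal (c ^ N) := by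
    rw [← ENNReal.ofReal_mul (by positivity), mul_pow]
  rw [h2, mul_assoc] at h1
  rw [← mul_assoc, ← mul_assoc, ENNReal.mul_le_mul_iff_left (by
      simpa using (measure_ball_pos volume (0:EuclideanSpace ℝ (Fin N)) one_pos).ne')
      measure_ball_lt_top.ne,
    ENNReal.mul_le_mul_iff_left (by simp [ENNReal.ofReal_eq_zero, not_le]; positivity)
      ENNReal.ofReal_ne_top, ← ENNReal.ofReal_natCast s.card,
    ENNReal.ofReal_le_ofReal_iff (by positivity)] at h1
  exact h1

open scoped Classical in
lemma key_bound {N m : ℕ} (p : Fin m → EuclideanSpace ℝ (Fin N)) (r : Fin m → ℝ)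
    (hr : ∀ i, 0 < r i)
    (hdisj : Pairwise fun i j =>
      Disjoint (closedBall (p i) (r i / 6)) (closedBall (p j) (r j / 6)))
    (i : Fin m) :
    ∑ j ∈ Finset.univ.filter (fun j =>
        (closedBall (p i) (r i) ∩ closedBall (p j) (r j)).Nonempty ∧ r i ≤ r j),
      r i / r j ≤ 4 * 108 ^ N := by
  set T := Finset.univ.filter (fun j =>
      (closedBall (p i) (r i) ∩ closedBall (p j) (r j)).Nonempty ∧ r i ≤ r j) with hT
  set t : Fin m → ℕ := fun j => Nat.log 2 ⌊r j / r i⌋₊ with ht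
  -- basic facts for j ∈ T
  have hfacts : ∀ j ∈ T, (2 : ℝ) ^ (t j) * r i ≤ r j ∧ r j < 2 ^ (t j + 1) * r i ∧
      dist (p j) (p i) ≤ r j + r i := by
    intro j hj
    rw [hT, Finset.mem_filter] at hj
    obtain ⟨-, ⟨z, hz1, hz2⟩, hle⟩ := hj
    have hx1 : 1 ≤ r j / r i := (one_le_div (hr i)).2 hle
    have hn : 1 ≤ ⌊r j / r i⌋₊ := Nat.le_floor (by exact_mod_cast hx1)
    have hpow_le : (2 : ℝ) ^ (t j) ≤ r j / r i := by
      calc (2 : ℝ) ^ (t j) = ((2 ^ (t j) : ℕ) : ℝ) := by push_cast; ring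
        _ ≤ (⌊r j / r i⌋₊ : ℝ) := by
            exact_mod_cast Nat.pow_log_le_self 2 (by omega)
        _ ≤ r j / r i := Nat.floor_le (by positivity)
    have hlt : r j / r i < 2 ^ (t j + 1) := by
      calc r j / r i < ⌊r j / r i⌋₊ + 1 := Nat.lt_floor_add_one _
        _ ≤ (2 : ℝ) ^ (t j + 1) := by
            have := Nat.lt_pow_succ_log_self (b := 2) (by norm_num) ⌊r j / r i⌋₊
            exact_mod_cast Nat.succ_le_of_lt this
    refine ⟨?_, ?_, ?_⟩
    · have := mul_le_mul_of_nonneg_right hpow_le (hr i).le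
      rwa [div_mul_cancel₀ _ (hr i).ne'] at this
    · have := mul_lt_mul_of_pos_right hlt (hr i)
      rwa [div_mul_cancel₀ _ (hr i).ne'] at this
    · calc dist (p j) (p i) ≤ dist (p j) z + dist z (p i) := dist_triangle _ _ _
        _ ≤ r j + r i := by
            rw [dist_comm (p j) z]
            exact add_le_add (mem_closedBall.1 hz2) (mem_closedBall.1 hz1)
  -- pointwise bound
  have hpt : ∀ j ∈ T, r i / r j ≤ (1 / 2 : ℝ) ^ (t j) := by
    intro j hj
    obtain ⟨h1, -, -⟩ := hfacts j hj
    rw [div_pow, one_pow, div_le_div_iff₀ (hr j) (by positivity)]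
    nlinarith [h1]
  -- fiber cardinality bound
  have hfiber : ∀ b : ℕ, ((T.filter fun j => t j = b).card : ℝ) ≤ 30 ^ N := by
    intro b
    have hcpos : (0:ℝ) < 2 ^ b * r i / 6 := div_pos (mul_pos (by positivity) (hr i)) (by norm_num)
    have h2b : (1:ℝ) ≤ 2 ^ b := one_le_pow₀ one_le_two
    apply packing_card (T.filter fun j => t j = b) p (p i) hcpos
    · intro a ha b' hb' hne
      have ha' := Finset.mem_filter.1 ha
      have hb'' := Finset.mem_filter.1 hb'
      have h1a := (hfacts a ha'.1).1
      have h1b := (hfacts b' hb''.1).1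
      rw [ha'.2] at h1a
      rw [hb''.2] at h1b
      exact (hdisj hne).mono (closedBall_subset_closedBall (by linarith))
        (closedBall_subset_closedBall (by linarith))
    · intro a ha
      have ha' := Finset.mem_filter.1 ha
      obtain ⟨h1a, h2a, h3a⟩ := hfacts a ha'.1
      rw [ha'.2] at h1a h2a
      apply closedBall_subset_closedBall'
      have hri := hr i
      calc 2 ^ b * r i / 6 + dist (p a) (p i) ≤ 2 ^ b * r i / 6 + (r a + r i) := by linarith
        _ ≤ 30 * (2 ^ b * r i / 6) := by
            rw [pow_succ] at h2a
            nlinarith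
  calc ∑ j ∈ T, r i / r j ≤ ∑ j ∈ T, (1/2:ℝ) ^ (t j) := Finset.sum_le_sum hpt
    _ = ∑ b ∈ T.image t, (T.filter fun j => t j = b).card • (1/2:ℝ) ^ b := Finset.sum_comp _ t
    _ ≤ ∑ b ∈ T.image t, (30:ℝ) ^ N * (1/2:ℝ) ^ b := by
        apply Finset.sum_le_sum
        intro b hb
        rw [nsmul_eq_mul]
        exact mul_le_mul_of_nonneg_right (hfiber b) (by positivity)
    _ = (30:ℝ) ^ N * ∑ b ∈ T.image t, (1/2:ℝ) ^ b := by rw [Finset.mul_sum]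
    _ ≤ (30:ℝ) ^ N * 2 := by
        apply mul_le_mul_of_nonneg_left _ (by positivity)
        calc ∑ b ∈ T.image t, (1/2:ℝ) ^ b
            ≤ ∑ b ∈ Finset.range ((T.image t).sup id + 1), (1/2:ℝ) ^ b := by
              apply Finset.sum_le_sum_of_subset_of_nonneg
              · intro b hb
                rw [Finset.mem_range]
                exact Nat.lt_succ_of_le (Finset.le_sup (f := id) hb)
              · intros; positivity
          _ ≤ 2 := sum_geometric_two_le _
    _ ≤ 4 * 108 ^ N := by
        have h30 : (30:ℝ) ^ N ≤ 108 ^ N := pow_le_pow_left₀ (by norm_num) (by norm_num) N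
        have h0 : (0:ℝ) ≤ 108 ^ N := by positivity
        linarith

/-- The combinatorial core of Proposition A.2: with pairwise disjoint sixth-radius
cores, the sum of `min(rᵢ, r_j)^k / (rᵢ r_j)` over ordered pairs of intersecting balls
is at most `8 · 108^N · ∑_j r_j^(k-2)`. -/

theorem stmt_7 (N : ℕ) (hN : 0 < N) (k : ℝ) (m : ℕ)
    (p : Fin m → EuclideanSpace ℝ (Fin N)) (r : Fin m → ℝ) (hr : ∀ i, 0 < r i)
    (hdisj : Pairwise fun i j =>
      Disjoint (closedBall (p i) (r i / 6)) (closedBall (p j) (r j / 6))) :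
    ∑ ij ∈ Finset.univ.filter (fun ij : Fin m × Fin m =>
        (closedBall (p ij.1) (r ij.1) ∩ closedBall (p ij.2) (r ij.2)).Nonempty),
      min (r ij.1) (r ij.2) ^ k / (r ij.1 * r ij.2)
      ≤ 8 * 108 ^ N * ∑ j, r j ^ (k - 2) := by
  set G : Fin m × Fin m → ℝ := fun ij =>
    if (closedBall (p ij.1) (r ij.1) ∩ closedBall (p ij.2) (r ij.2)).Nonempty ∧ r ij.1 ≤ r ij.2
    then r ij.1 ^ (k - 2) * (r ij.1 / r ij.2) else 0 with hG
  have hG0 : ∀ ij, 0 ≤ G ij := by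
    intro ij
    rw [hG]
    dsimp only
    split
    · have := hr ij.1; have := hr ij.2; positivity
    · exact le_refl _
  -- pointwise bound
  have hkey : ∀ ij : Fin m × Fin m,
      (if (closedBall (p ij.1) (r ij.1) ∩ closedBall (p ij.2) (r ij.2)).Nonempty
       then min (r ij.1) (r ij.2) ^ k / (r ij.1 * r ij.2) else 0) ≤ G ij + G ij.swap := by
    intro ⟨i, j⟩
    dsimp only
    by_cases hint : (closedBall (p i) (r i) ∩ closedBall (p j) (r j)).Nonempty
    · rw [if_pos hint]
      have hint' : (closedBall (p j) (r j) ∩ closedBall (p i) (r i)).Nonempty := by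
        rwa [Set.inter_comm]
      have hval : ∀ a b : Fin m, r a ≤ r b →
          min (r a) (r b) ^ k / (r a * r b) = r a ^ (k - 2) * (r a / r b) := by
        intro a b hab
        rw [min_eq_left hab, show k = (k - 2) + 2 by ring, Real.rpow_add (hr a),
          Real.rpow_two, sq]
        field_simp [(hr a).ne', (hr b).ne']
        ring
      rcases le_total (r i) (r j) with h | h
      · rw [hG]
        dsimp only
        rw [if_pos ⟨hint, h⟩, hval i j h]
        have h2 := hG0 (j, i)
        have hswap : (i, j).swap = (j, i) := rfl
        rw [hswap]
        linarith
      · have hswap : (i, j).swap = (j, i) := rfl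
        rw [hswap, min_comm, mul_comm]
        rw [hval j i h]
        have h1 := hG0 (i, j)
        have : G (j, i) = r j ^ (k - 2) * (r j / r i) := by
          rw [hG]; dsimp only; rw [if_pos ⟨hint', h⟩]
        rw [this]
        linarith
    · rw [if_neg hint]
      exact add_nonneg (hG0 _) (hG0 _)
  have hinner : ∀ i, ∑ j, G (i, j) ≤ r i ^ (k - 2) * (4 * 108 ^ N) := by
    intro i
    have : (∑ j, G (i, j)) = ∑ j ∈ Finset.univ.filter (fun j =>
        (closedBall (p i) (r i) ∩ closedBall (p j) (r j)).Nonempty ∧ r i ≤ r j),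
        r i ^ (k - 2) * (r i / r j) := by
      rw [Finset.sum_filter]
    rw [this, ← Finset.mul_sum]
    exact mul_le_mul_of_nonneg_left (key_bound p r hr hdisj i) (Real.rpow_nonneg (hr i).le _)
  calc ∑ ij ∈ Finset.univ.filter (fun ij : Fin m × Fin m =>
        (closedBall (p ij.1) (r ij.1) ∩ closedBall (p ij.2) (r ij.2)).Nonempty),
      min (r ij.1) (r ij.2) ^ k / (r ij.1 * r ij.2)
      = ∑ ij : Fin m × Fin m, (if (closedBall (p ij.1) (r ij.1) ∩ closedBall (p ij.2) (r ij.2)).Nonempty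
          then min (r ij.1) (r ij.2) ^ k / (r ij.1 * r ij.2) else 0) := Finset.sum_filter _ _
    _ ≤ ∑ ij : Fin m × Fin m, (G ij + G ij.swap) := Finset.sum_le_sum fun ij _ => hkey ij
    _ = ∑ ij : Fin m × Fin m, G ij + ∑ ij : Fin m × Fin m, G ij.swap := Finset.sum_add_distrib
    _ = 2 * ∑ ij : Fin m × Fin m, G ij := by
        rw [show (∑ ij : Fin m × Fin m, G ij.swap) = ∑ ij : Fin m × Fin m, G ij from
          Fintype.sum_equiv (Equiv.prodComm _ _) _ _ (fun ij => rfl)]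
        ring
    _ = 2 * ∑ i, ∑ j, G (i, j) := by rw [Fintype.sum_prod_type]
    _ ≤ 2 * ∑ i, r i ^ (k - 2) * (4 * 108 ^ N) := by
        have h := Finset.sum_le_sum (fun i (_ : i ∈ Finset.univ) => hinner i)
        linarith
    _ = 8 * 108 ^ N * ∑ j, r j ^ (k - 2) := by
        rw [← Finset.sum_mul]
        ring
end
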